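/- Local Lipschitz continuity of the LQ cost (Lemma 3): for every stable gain θ there exist ε > 0 and L > 0 such that every θ′ ∈ ℝ^{d_u×d_x} with ‖θ′ − θ‖_F < ε is stable and satisfies | J(θ′) − J(θ) | ≤ L ‖θ′ − θ‖_F. -/

import Mathlib

/-!
Rescaling by `√γ` turns stability of `θ` into `‖Dᵗ‖ ≤ c rᵗ` for `D = √γ C_θ`, and `M(θ)` into the
Lyapunov sum `∑ (Dᵀ)ᵗ K Dᵗ` with `K = Q + θᵀ R θ`. Expanding `(D + E)ᵗ` gives
`‖(D + E)ᵗ‖ ≤ c (r + c ‖E‖)ᵗ`, so all gains near `θ` are stable with the common constants `c` and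
`ρ = (1 + r) / 2`. The noncommutative telescoping `D'ᵗ - Dᵗ = ∑ₖ Dᵗ⁻¹⁻ᵏ (D' - D) D'ᵏ` then bounds
the `t`-th term of `M(θ') - M(θ)` by `O(t ρᵗ) ‖θ' - θ‖`, which is summable; finally `J` is a
linear functional of `M`.
-/

open Matrix
open scoped Matrix.Norms.L2Operator

noncomputable section

/-- The closed-loop matrix `C_θ = A - B θ`. -/
def Cl {dx du : ℕ} (A : Matrix (Fin dx) (Fin dx) ℝ) (B : Matrix (Fin dx) (Fin du) ℝ)
    (θ : Matrix (Fin du) (Fin dx) ℝ) : Matrix (Fin dx) (Fin dx) ℝ :=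
  A - B * θ

/-- A closed-loop matrix `C` is stable (for discount factor `γ`) if
`‖C^t‖ ≤ c rᵗ γ^{-t/2}` (L2 operator norm) for some `c > 0` and `r ∈ (0,1)`. -/
def IsStable (γ : ℝ) {dx : ℕ} (C : Matrix (Fin dx) (Fin dx) ℝ) : Prop :=
  ∃ c > (0:ℝ), ∃ r ∈ Set.Ioo (0:ℝ) 1, ∀ t : ℕ, ‖C ^ t‖ ≤ c * r ^ t * γ ^ (-(t : ℝ) / 2)

/-- `M(θ) := ∑_{t=0}^∞ γᵗ (C_θᵀ)ᵗ (Q + θᵀ R θ) C_θᵗ`. -/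
def Mmat {dx du : ℕ} (γ : ℝ) (A : Matrix (Fin dx) (Fin dx) ℝ) (B : Matrix (Fin dx) (Fin du) ℝ)
    (Q : Matrix (Fin dx) (Fin dx) ℝ) (R : Matrix (Fin du) (Fin du) ℝ)
    (θ : Matrix (Fin du) (Fin dx) ℝ) : Matrix (Fin dx) (Fin dx) ℝ :=
  ∑' t : ℕ, γ ^ t • ((Cl A B θ)ᵀ ^ t * (Q + θᵀ * R * θ) * Cl A B θ ^ t)

/-- `Σ_θ := (1-γ) ∑_{t=0}^∞ γᵗ C_θᵗ Σ₁ (C_θᵀ)ᵗ`. -/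
def SigMat {dx du : ℕ} (γ : ℝ) (A : Matrix (Fin dx) (Fin dx) ℝ) (B : Matrix (Fin dx) (Fin du) ℝ)
    (S1 : Matrix (Fin dx) (Fin dx) ℝ) (θ : Matrix (Fin du) (Fin dx) ℝ) :
    Matrix (Fin dx) (Fin dx) ℝ :=
  (1 - γ) • ∑' t : ℕ, γ ^ t • (Cl A B θ ^ t * S1 * (Cl A B θ)ᵀ ^ t)

/-- `E_θ := (R + γ Bᵀ M(θ) B) θ - γ Bᵀ M(θ) A`. -/
def Emat {dx du : ℕ} (γ : ℝ) (A : Matrix (Fin dx) (Fin dx) ℝ) (B : Matrix (Fin dx) (Fin du) ℝ)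
    (Q : Matrix (Fin dx) (Fin dx) ℝ) (R : Matrix (Fin du) (Fin du) ℝ)
    (θ : Matrix (Fin du) (Fin dx) ℝ) : Matrix (Fin du) (Fin dx) ℝ :=
  (R + γ • (Bᵀ * Mmat γ A B Q R θ * B)) * θ - γ • (Bᵀ * Mmat γ A B Q R θ * A)

/-- `J(θ) := (1-γ) tr(M(θ) Σ₁)`. -/
def Jcost {dx du : ℕ} (γ : ℝ) (A : Matrix (Fin dx) (Fin dx) ℝ) (B : Matrix (Fin dx) (Fin du) ℝ)
    (Q : Matrix (Fin dx) (Fin dx) ℝ) (R : Matrix (Fin du) (Fin du) ℝ)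
    (S1 : Matrix (Fin dx) (Fin dx) ℝ) (θ : Matrix (Fin du) (Fin dx) ℝ) : ℝ :=
  (1 - γ) * (Mmat γ A B Q R θ * S1).trace

/-- The smallest singular value of a square matrix, as the infimum of `‖Ax‖` over unit vectors. -/
def sigmaMin {m : Type*} [Fintype m] [DecidableEq m] (A : Matrix m m ℝ) : ℝ :=
  ⨅ x : {x : EuclideanSpace ℝ m // ‖x‖ = 1}, ‖Matrix.toEuclideanLin A x.1‖

/-- The Frobenius norm of a matrix. -/
def frobNorm {m n : Type*} [Fintype m] [Fintype n] (A : Matrix m n ℝ) : ℝ :=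
  Real.sqrt (∑ i, ∑ j, A i j ^ 2)

theorem pow_sub_pow_eq_sum {α : Type*} [Ring α] (a b : α) (t : ℕ) :
    b ^ t - a ^ t = ∑ k ∈ Finset.range t, a ^ (t - 1 - k) * (b - a) * b ^ k := by
  induction t with
  | zero => simp
  | succ t ih =>
    have hstep : b ^ (t + 1) - a ^ (t + 1) = a * (b ^ t - a ^ t) + (b - a) * b ^ t := by
      rw [pow_succ', pow_succ']
      noncomm_ring
    rw [hstep, ih, Finset.mul_sum, Finset.sum_range_succ, Nat.add_sub_cancel, Nat.sub_self,
      pow_zero, one_mul]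
    congr 1
    refine Finset.sum_congr rfl fun k hk => ?_
    rw [show t - k = t - 1 - k + 1 by have := Finset.mem_range.mp hk; omega, pow_succ']
    noncomm_ring

section NormedRing

variable {α : Type*} [NormedRing α] {a b : α} {c ρ : ℝ}

theorem nonneg_of_forall_norm_pow_le (ha : ∀ t, ‖a ^ t‖ ≤ c * ρ ^ t) : 0 ≤ c := by
  simpa using (norm_nonneg _).trans (ha 0)

theorem norm_add_pow_le (e : α) (hρ : 0 ≤ ρ) (ha : ∀ t, ‖a ^ t‖ ≤ c * ρ ^ t) (t : ℕ) :
    ‖(a + e) ^ t‖ ≤ c * (ρ + c * ‖e‖) ^ t := by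
  have hc := nonneg_of_forall_norm_pow_le ha
  set x := ρ + c * ‖e‖
  induction t using Nat.strong_induction_on with
  | _ t ih =>
    have hsum : ‖(a + e) ^ t - a ^ t‖ ≤ c * (x ^ t - ρ ^ t) := by
      rw [pow_sub_pow_eq_sum, add_sub_cancel_left, ← geom_sum₂_mul, Finset.sum_mul,
        Finset.mul_sum]
      refine (norm_sum_le _ _).trans (Finset.sum_le_sum fun k hk => ?_)
      calc ‖a ^ (t - 1 - k) * e * (a + e) ^ k‖
          ≤ ‖a ^ (t - 1 - k)‖ * ‖e‖ * ‖(a + e) ^ k‖ := norm_mul₃_le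
        _ ≤ c * ρ ^ (t - 1 - k) * ‖e‖ * (c * x ^ k) := by
          gcongr
          exacts [ha _, ih k (Finset.mem_range.mp hk)]
        _ = c * (x ^ k * ρ ^ (t - 1 - k) * (x - ρ)) := by ring
    calc ‖(a + e) ^ t‖ ≤ ‖a ^ t‖ + ‖(a + e) ^ t - a ^ t‖ := norm_le_insert' _ _
      _ ≤ c * ρ ^ t + c * (x ^ t - ρ ^ t) := add_le_add (ha t) hsum
      _ = c * x ^ t := by ring

theorem norm_pow_sub_pow_le (hρ : 0 ≤ ρ) (ha : ∀ t, ‖a ^ t‖ ≤ c * ρ ^ t)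
    (hb : ∀ t, ‖b ^ t‖ ≤ c * ρ ^ t) (t : ℕ) :
    ‖b ^ t - a ^ t‖ ≤ c ^ 2 * t * ρ ^ (t - 1) * ‖b - a‖ := by
  have hc := nonneg_of_forall_norm_pow_le ha
  rw [pow_sub_pow_eq_sum]
  refine (norm_sum_le _ _).trans ?_
  calc ∑ k ∈ Finset.range t, ‖a ^ (t - 1 - k) * (b - a) * b ^ k‖
      ≤ ∑ k ∈ Finset.range t, c ^ 2 * ρ ^ (t - 1) * ‖b - a‖ := by
        refine Finset.sum_le_sum fun k hk => ?_
        calc ‖a ^ (t - 1 - k) * (b - a) * b ^ k‖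
            ≤ ‖a ^ (t - 1 - k)‖ * ‖b - a‖ * ‖b ^ k‖ := norm_mul₃_le
          _ ≤ c * ρ ^ (t - 1 - k) * ‖b - a‖ * (c * ρ ^ k) := by
            gcongr
            exacts [ha _, hb _]
          _ = c ^ 2 * (ρ ^ (t - 1 - k) * ρ ^ k) * ‖b - a‖ := by ring
          _ = c ^ 2 * ρ ^ (t - 1) * ‖b - a‖ := by
            rw [← pow_add, Nat.sub_add_cancel (by have := Finset.mem_range.mp hk; omega)]
    _ = c ^ 2 * t * ρ ^ (t - 1) * ‖b - a‖ := by simp; ring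

theorem norm_pow_le_of_norm_sub_le {σ : ℝ} (hρ : 0 ≤ ρ) (ha : ∀ t, ‖a ^ t‖ ≤ c * ρ ^ t)
    (hσ : ρ + c * ‖b - a‖ ≤ σ) (t : ℕ) : ‖b ^ t‖ ≤ c * σ ^ t := by
  have hbound := norm_add_pow_le (b - a) hρ ha t
  rw [add_sub_cancel] at hbound
  refine hbound.trans ?_
  have hc := nonneg_of_forall_norm_pow_le ha
  gcongr

end NormedRing

section Lyapunov

variable {α : Type*} [NormedRing α] [StarRing α] [NormedStarGroup α] {a b k l : α} {c ρ : ℝ}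

def lyapunovSum (a k : α) : α :=
  ∑' t : ℕ, star a ^ t * k * a ^ t

theorem norm_star_pow (a : α) (t : ℕ) : ‖star a ^ t‖ = ‖a ^ t‖ := by
  rw [← star_pow, norm_star]

theorem norm_star_pow_mul_mul_pow_le (hρ : 0 ≤ ρ) (hρ1 : ρ ≤ 1) (ha : ∀ t, ‖a ^ t‖ ≤ c * ρ ^ t)
    (t : ℕ) : ‖star a ^ t * k * a ^ t‖ ≤ c ^ 2 * ‖k‖ * ρ ^ t := by
  have hc := nonneg_of_forall_norm_pow_le ha
  calc ‖star a ^ t * k * a ^ t‖ ≤ ‖star a ^ t‖ * ‖k‖ * ‖a ^ t‖ := norm_mul₃_le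
    _ ≤ c * ρ ^ t * ‖k‖ * (c * ρ ^ t) := by
      rw [norm_star_pow]
      gcongr <;> exact ha t
    _ = c ^ 2 * ‖k‖ * ρ ^ t * ρ ^ t := by ring
    _ ≤ c ^ 2 * ‖k‖ * ρ ^ t * 1 := by gcongr; exact pow_le_one₀ hρ hρ1
    _ = c ^ 2 * ‖k‖ * ρ ^ t := mul_one _

variable [CompleteSpace α]

theorem summable_star_pow_mul_mul_pow (hρ : 0 ≤ ρ) (hρ1 : ρ < 1)
    (ha : ∀ t, ‖a ^ t‖ ≤ c * ρ ^ t) : Summable fun t : ℕ => star a ^ t * k * a ^ t :=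
  .of_norm_bounded ((summable_geometric_of_lt_one hρ hρ1).mul_left _)
    (norm_star_pow_mul_mul_pow_le hρ hρ1.le ha)

theorem norm_lyapunovSum_sub_le (hρ : 0 ≤ ρ) (hρ1 : ρ < 1) (ha : ∀ t, ‖a ^ t‖ ≤ c * ρ ^ t)
    (hb : ∀ t, ‖b ^ t‖ ≤ c * ρ ^ t) :
    ‖lyapunovSum b l - lyapunovSum a k‖ ≤
      c ^ 3 * (‖k‖ + ‖l‖) * ρ / (1 - ρ) ^ 2 * ‖b - a‖ + c ^ 2 / (1 - ρ) * ‖l - k‖ := by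
  have hc := nonneg_of_forall_norm_pow_le ha
  have hterm : ∀ t : ℕ, ‖star b ^ t * l * b ^ t - star a ^ t * k * a ^ t‖ ≤
      c ^ 3 * (‖k‖ + ‖l‖) * ‖b - a‖ * (t * ρ ^ t) + c ^ 2 * ‖l - k‖ * ρ ^ t := by
    intro t
    set d := b ^ t - a ^ t
    have hd : ‖d‖ ≤ c ^ 2 * t * ‖b - a‖ := by
      refine (norm_pow_sub_pow_le hρ ha hb t).trans ?_
      have := pow_le_one₀ (n := t - 1) hρ hρ1.le
      have : 0 ≤ c ^ 2 * t * ‖b - a‖ := by positivity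
      nlinarith
    have hsplit : star b ^ t * l * b ^ t - star a ^ t * k * a ^ t =
        star d * l * b ^ t + star a ^ t * (l - k) * b ^ t + star a ^ t * k * d := by
      simp only [d, star_sub, star_pow]
      noncomm_ring
    rw [hsplit]
    calc _ ≤ ‖star d‖ * ‖l‖ * ‖b ^ t‖ + ‖star a ^ t‖ * ‖l - k‖ * ‖b ^ t‖
          + ‖star a ^ t‖ * ‖k‖ * ‖d‖ :=
        (norm_add₃_le).trans (add_le_add (add_le_add norm_mul₃_le norm_mul₃_le) norm_mul₃_le)
      _ ≤ c ^ 2 * t * ‖b - a‖ * ‖l‖ * (c * ρ ^ t) + c * ρ ^ t * ‖l - k‖ * (c * ρ ^ t)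
          + c * ρ ^ t * ‖k‖ * (c ^ 2 * t * ‖b - a‖) := by
        rw [norm_star, norm_star_pow]
        gcongr <;> first | exact ha t | exact hb t
      _ = c ^ 3 * (‖k‖ + ‖l‖) * ‖b - a‖ * (t * ρ ^ t) + c ^ 2 * ‖l - k‖ * (ρ ^ t * ρ ^ t) := by
        ring
      _ ≤ c ^ 3 * (‖k‖ + ‖l‖) * ‖b - a‖ * (t * ρ ^ t) + c ^ 2 * ‖l - k‖ * ρ ^ t := by
        gcongr
        exact mul_le_of_le_one_left (by positivity) (pow_le_one₀ hρ hρ1.le)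
  have hρ1' : ‖ρ‖ < 1 := by rwa [Real.norm_of_nonneg hρ]
  have hsum := ((hasSum_coe_mul_geometric_of_norm_lt_one hρ1').mul_left
    (c ^ 3 * (‖k‖ + ‖l‖) * ‖b - a‖)).add
    ((hasSum_geometric_of_lt_one hρ hρ1).mul_left (c ^ 2 * ‖l - k‖))
  rw [lyapunovSum, lyapunovSum, ← (summable_star_pow_mul_mul_pow hρ hρ1 hb).tsum_sub
    (summable_star_pow_mul_mul_pow hρ hρ1 ha)]
  refine (tsum_of_norm_bounded hsum hterm).trans_eq ?_
  ring

end Lyapunov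

section MatrixNorms

variable {m n : Type*} [Fintype m] [Fintype n]

theorem l2_opNorm_transpose [DecidableEq m] [DecidableEq n] (X : Matrix m n ℝ) :
    ‖Xᵀ‖ = ‖X‖ := by
  rw [← conjTranspose_eq_transpose_of_trivial, l2_opNorm_conjTranspose]

theorem l2_opNorm_le_frobNorm [DecidableEq n] (X : Matrix m n ℝ) : ‖X‖ ≤ frobNorm X := by
  refine ContinuousLinearMap.opNorm_le_bound _ (Real.sqrt_nonneg _) fun v => ?_
  rw [EuclideanSpace.norm_eq, EuclideanSpace.norm_eq, frobNorm, ← Real.sqrt_mul (by positivity)]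
  refine Real.sqrt_le_sqrt ?_
  simp only [Real.norm_eq_abs, sq_abs]
  rw [Finset.sum_mul]
  exact Finset.sum_le_sum fun i _ => Finset.sum_mul_sq_le_sq_mul_sq Finset.univ (X i) v.ofLp

theorem l2_opNorm_mul₃_le {p q : Type*} [Fintype p] [Fintype q] [DecidableEq n] [DecidableEq p]
    [DecidableEq q] {X : Matrix m n ℝ} {Y : Matrix n p ℝ} {Z : Matrix p q ℝ} :
    ‖X * Y * Z‖ ≤ ‖X‖ * ‖Y‖ * ‖Z‖ :=
  (l2_opNorm_mul _ _).trans (by gcongr; exact l2_opNorm_mul _ _)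

theorem norm_transpose_mul_mul_sub_le [DecidableEq m] [DecidableEq n] (R : Matrix m m ℝ)
    (θ θ' : Matrix m n ℝ) :
    ‖θ'ᵀ * R * θ' - θᵀ * R * θ‖ ≤ (2 * ‖θ‖ + ‖θ' - θ‖) * ‖R‖ * ‖θ' - θ‖ := by
  have hsplit : θ'ᵀ * R * θ' - θᵀ * R * θ = (θ' - θ)ᵀ * R * θ' + θᵀ * R * (θ' - θ) := by
    rw [transpose_sub, Matrix.sub_mul, Matrix.sub_mul, Matrix.mul_sub]
    abel
  calc _ ≤ ‖(θ' - θ)ᵀ * R * θ'‖ + ‖θᵀ * R * (θ' - θ)‖ := hsplit ▸ norm_add_le _ _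
    _ ≤ ‖θ' - θ‖ * ‖R‖ * ‖θ'‖ + ‖θ‖ * ‖R‖ * ‖θ' - θ‖ := by
      gcongr <;> refine l2_opNorm_mul₃_le.trans_eq ?_ <;> rw [l2_opNorm_transpose]
    _ ≤ ‖θ' - θ‖ * ‖R‖ * (‖θ‖ + ‖θ' - θ‖) + ‖θ‖ * ‖R‖ * ‖θ' - θ‖ := by
      gcongr
      exact norm_le_insert' θ' θ
    _ = (2 * ‖θ‖ + ‖θ' - θ‖) * ‖R‖ * ‖θ' - θ‖ := by ring

theorem exists_abs_trace_mul_le [DecidableEq n] (S : Matrix n n ℝ) :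
    ∃ C ≥ 0, ∀ X : Matrix n n ℝ, |(X * S).trace| ≤ C * ‖X‖ := by
  let f := LinearMap.toContinuousLinearMap
    ((traceLinearMap n ℝ ℝ).comp (LinearMap.mulRight ℝ S))
  refine ⟨‖f‖, norm_nonneg f, fun X => ?_⟩
  rw [← Real.norm_eq_abs]
  exact f.le_opNorm X

end MatrixNorms

section LQ

variable {dx du : ℕ} {γ : ℝ}

theorem isStable_iff_norm_sqrt_smul_pow_le (hγ : 0 < γ) (C : Matrix (Fin dx) (Fin dx) ℝ) :
    IsStable γ C ↔ ∃ c > 0, ∃ r ∈ Set.Ioo (0 : ℝ) 1, ∀ t : ℕ, ‖(√γ • C) ^ t‖ ≤ c * r ^ t := by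
  have hpow (t : ℕ) : γ ^ (-(t : ℝ) / 2) = (√γ ^ t)⁻¹ := by
    rw [Real.sqrt_eq_rpow, ← Real.rpow_natCast, ← Real.rpow_mul hγ.le, ← Real.rpow_neg hγ.le]
    ring_nf
  have hnorm (t : ℕ) : ‖(√γ • C) ^ t‖ = √γ ^ t * ‖C ^ t‖ := by
    rw [smul_pow, norm_smul, norm_pow, Real.norm_of_nonneg (Real.sqrt_nonneg γ)]
  have hsqrt (t : ℕ) : 0 < √γ ^ t := pow_pos (Real.sqrt_pos.2 hγ) t
  unfold IsStable
  simp_rw [hpow, hnorm, ← le_div_iff₀' (hsqrt _), div_eq_mul_inv]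

theorem Mmat_eq_lyapunovSum (hγ : 0 ≤ γ) (A : Matrix (Fin dx) (Fin dx) ℝ)
    (B : Matrix (Fin dx) (Fin du) ℝ) (Q : Matrix (Fin dx) (Fin dx) ℝ)
    (R : Matrix (Fin du) (Fin du) ℝ)
    (θ : Matrix (Fin du) (Fin dx) ℝ) :
    Mmat γ A B Q R θ = lyapunovSum (√γ • Cl A B θ) (Q + θᵀ * R * θ) := by
  refine tsum_congr fun t => ?_
  rw [star_smul, star_trivial, star_eq_conjTranspose, conjTranspose_eq_transpose_of_trivial,
    smul_pow, smul_pow, smul_mul_assoc, smul_mul_assoc, mul_smul_comm, smul_smul, ← mul_pow,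
    Real.mul_self_sqrt hγ]

theorem norm_sqrt_smul_Cl_sub_le (A : Matrix (Fin dx) (Fin dx) ℝ) (B : Matrix (Fin dx) (Fin du) ℝ)
    (θ θ' : Matrix (Fin du) (Fin dx) ℝ) :
    ‖√γ • Cl A B θ' - √γ • Cl A B θ‖ ≤ √γ * ‖B‖ * ‖θ' - θ‖ := by
  rw [← smul_sub, Cl, Cl, sub_sub_sub_cancel_left, ← Matrix.mul_sub, norm_smul,
    Real.norm_of_nonneg (Real.sqrt_nonneg γ), mul_assoc, norm_sub_rev θ' θ]
  gcongr
  exact l2_opNorm_mul _ _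

theorem norm_sqrt_smul_Cl_pow_le {c r : ℝ} (hr : 0 ≤ r) (A : Matrix (Fin dx) (Fin dx) ℝ)
    (B : Matrix (Fin dx) (Fin du) ℝ) {θ θ' : Matrix (Fin du) (Fin dx) ℝ}
    (hpow : ∀ t, ‖(√γ • Cl A B θ) ^ t‖ ≤ c * r ^ t)
    (hθ' : c * (√γ * ‖B‖ * ‖θ' - θ‖) ≤ (1 - r) / 2) (t : ℕ) :
    ‖(√γ • Cl A B θ') ^ t‖ ≤ c * ((1 + r) / 2) ^ t := by
  refine norm_pow_le_of_norm_sub_le hr hpow ?_ t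
  have := mul_le_mul_of_nonneg_left (norm_sqrt_smul_Cl_sub_le (γ := γ) A B θ θ')
    (nonneg_of_forall_norm_pow_le hpow)
  linarith

theorem Mmat_locally_lipschitz (hγ : 0 < γ) (A : Matrix (Fin dx) (Fin dx) ℝ)
    (B : Matrix (Fin dx) (Fin du) ℝ) (Q : Matrix (Fin dx) (Fin dx) ℝ)
    (R : Matrix (Fin du) (Fin du) ℝ)
    {θ : Matrix (Fin du) (Fin dx) ℝ} (hθ : IsStable γ (Cl A B θ)) :
    ∃ ε > (0 : ℝ), ∃ L ≥ (0 : ℝ), ∀ θ' : Matrix (Fin du) (Fin dx) ℝ, frobNorm (θ' - θ) < ε →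
      IsStable γ (Cl A B θ') ∧
        ‖Mmat γ A B Q R θ' - Mmat γ A B Q R θ‖ ≤ L * frobNorm (θ' - θ) := by
  obtain ⟨c, hc, r, ⟨hr0, hr1⟩, hpow⟩ := (isStable_iff_norm_sqrt_smul_pow_le hγ _).1 hθ
  set ρ := (1 + r) / 2 with hρ
  have hρ1 : ρ < 1 := by linarith
  have hrρ : r ≤ ρ := by linarith
  set β := √γ * ‖B‖
  set κ := (2 * ‖θ‖ + 1) * ‖R‖ with hκ
  set K := Q + θᵀ * R * θ
  -- `δ < 1` keeps `‖θ'‖ ≤ ‖θ‖ + 1`, hence `‖K_θ'‖` bounded; the second bound keeps the powers of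
  -- `√γ C_θ'` below `c ρᵗ`.
  refine ⟨min 1 ((1 - r) / (2 * c * (β + 1))), by positivity,
    c ^ 3 * (2 * ‖K‖ + κ) * ρ / (1 - ρ) ^ 2 * β + c ^ 2 / (1 - ρ) * κ, by positivity,
    fun θ' hθ' => ?_⟩
  set δ := frobNorm (θ' - θ)
  have hδ : 0 ≤ δ := Real.sqrt_nonneg _
  have hδ1 : δ < 1 := hθ'.trans_le (min_le_left _ _)
  have hδε : δ < (1 - r) / (2 * c * (β + 1)) := hθ'.trans_le (min_le_right _ _)
  have hθ'θ : ‖θ' - θ‖ ≤ δ := l2_opNorm_le_frobNorm _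
  have hK : ‖(Q + θ'ᵀ * R * θ') - K‖ ≤ κ * δ := by
    rw [add_sub_add_left_eq_sub, hκ]
    refine (norm_transpose_mul_mul_sub_le R θ θ').trans ?_
    gcongr
    linarith
  have hpowρ (t : ℕ) : ‖(√γ • Cl A B θ) ^ t‖ ≤ c * ρ ^ t := (hpow t).trans (by gcongr)
  have hpow' : ∀ t, ‖(√γ • Cl A B θ') ^ t‖ ≤ c * ρ ^ t := by
    refine norm_sqrt_smul_Cl_pow_le hr0.le A B hpow ?_
    rw [lt_div_iff₀ (by positivity)] at hδε
    have : β * ‖θ' - θ‖ ≤ (β + 1) * δ := by gcongr; linarith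
    nlinarith
  refine ⟨(isStable_iff_norm_sqrt_smul_pow_le hγ _).2 ⟨c, hc, ρ, ⟨by positivity, hρ1⟩, hpow'⟩, ?_⟩
  rw [Mmat_eq_lyapunovSum hγ.le, Mmat_eq_lyapunovSum hγ.le]
  refine (norm_lyapunovSum_sub_le (by positivity) hρ1 hpowρ hpow').trans ?_
  have hD : ‖√γ • Cl A B θ' - √γ • Cl A B θ‖ ≤ β * δ :=
    (norm_sqrt_smul_Cl_sub_le A B θ θ').trans (by gcongr)
  have hK' : ‖Q + θ'ᵀ * R * θ'‖ ≤ ‖K‖ + κ := (norm_le_insert' _ K).trans <| by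
    gcongr
    exact hK.trans (mul_le_of_le_one_right (by positivity) hδ1.le)
  calc _ ≤ c ^ 3 * (‖K‖ + (‖K‖ + κ)) * ρ / (1 - ρ) ^ 2 * (β * δ)
          + c ^ 2 / (1 - ρ) * (κ * δ) := by gcongr
    _ = _ := by ring

end LQ

theorem cost_locally_lipschitz_general
    {dx du : ℕ} (γ : ℝ) (hγ : γ ∈ Set.Ioo (0:ℝ) 1)
    (A : Matrix (Fin dx) (Fin dx) ℝ) (B : Matrix (Fin dx) (Fin du) ℝ)
    (Q : Matrix (Fin dx) (Fin dx) ℝ) (R : Matrix (Fin du) (Fin du) ℝ)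
    (S1 : Matrix (Fin dx) (Fin dx) ℝ)
    (θ : Matrix (Fin du) (Fin dx) ℝ) (hθ : IsStable γ (Cl A B θ)) :
    ∃ ε > (0:ℝ), ∃ L > (0:ℝ), ∀ θ' : Matrix (Fin du) (Fin dx) ℝ,
      frobNorm (θ' - θ) < ε →
        IsStable γ (Cl A B θ') ∧
        |Jcost γ A B Q R S1 θ' - Jcost γ A B Q R S1 θ| ≤ L * frobNorm (θ' - θ) := by
  obtain ⟨ε, hε, L, hL, hM⟩ := Mmat_locally_lipschitz hγ.1 A B Q R hθ
  obtain ⟨C, hC, htrace⟩ := exists_abs_trace_mul_le S1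
  have hγ1 : 0 < 1 - γ := sub_pos.2 hγ.2
  refine ⟨ε, hε, (1 - γ) * C * L + 1, by positivity, fun θ' hθ' => ?_⟩
  obtain ⟨hstable, hMθ'⟩ := hM θ' hθ'
  refine ⟨hstable, ?_⟩
  have hδ : 0 ≤ frobNorm (θ' - θ) := Real.sqrt_nonneg _
  calc |Jcost γ A B Q R S1 θ' - Jcost γ A B Q R S1 θ|
      = (1 - γ) * |((Mmat γ A B Q R θ' - Mmat γ A B Q R θ) * S1).trace| := by
        rw [Jcost, Jcost, ← mul_sub, Matrix.sub_mul, trace_sub, abs_mul, abs_of_pos hγ1]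
    _ ≤ (1 - γ) * (C * (L * frobNorm (θ' - θ))) := by
        gcongr
        exact (htrace _).trans (by gcongr)
    _ ≤ ((1 - γ) * C * L + 1) * frobNorm (θ' - θ) := by nlinarith

/-- Local Lipschitz continuity of the LQ cost: for every stable gain `θ`
there exist `ε > 0` and `L > 0` such that every `θ′` with `‖θ′ − θ‖_F < ε` is stable and
satisfies `|J(θ′) − J(θ)| ≤ L ‖θ′ − θ‖_F`. -/
theorem cost_locally_lipschitz
    {dx du : ℕ} (γ : ℝ) (hγ : γ ∈ Set.Ioo (0:ℝ) 1)
    (A : Matrix (Fin dx) (Fin dx) ℝ) (B : Matrix (Fin dx) (Fin du) ℝ)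
    (Q : Matrix (Fin dx) (Fin dx) ℝ) (R : Matrix (Fin du) (Fin du) ℝ)
    (S1 : Matrix (Fin dx) (Fin dx) ℝ)
    (hQ : Qᵀ = Q) (hR : Rᵀ = R) (hS1 : S1.PosSemidef)
    (θ : Matrix (Fin du) (Fin dx) ℝ) (hθ : IsStable γ (Cl A B θ)) :
    ∃ ε > (0:ℝ), ∃ L > (0:ℝ), ∀ θ' : Matrix (Fin du) (Fin dx) ℝ,
      frobNorm (θ' - θ) < ε →
        IsStable γ (Cl A B θ') ∧
        |Jcost γ A B Q R S1 θ' - Jcost γ A B Q R S1 θ| ≤ L * frobNorm (θ' - θ) :=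
  cost_locally_lipschitz_general γ hγ A B Q R S1 θ hθ
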